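/- Let H be an invertible n×n complex Hermitian matrix, let γ be an n×n matrix with real entries satisfying γ† = γ and γ² = 1, and let C be an n×n unitary matrix satisfying C H C⁻¹ = -H* (charge-conjugation symmetry) and C γ = -γ C. Then the operator V = γ · sgn(H) satisfies C V C⁻¹ = V*, where M* denotes entrywise complex conjugation. -/

import Mathlib

/-!
Conjugation by the unitary `C` and entrywise complex conjugation are multiplicative bijections
that preserve positive semidefiniteness. Each therefore commutes with the positive square root
(by its uniqueness) and with inversion. As they agree up to sign on `H`, they agree on `H²`,
hence on `(√(H²))⁻¹`, hence up to sign on `sgn H = H (√(H²))⁻¹`. They also agree up to sign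
on the real matrix `γ`, so they agree on `V = γ sgn H`.
-/

open Matrix
open scoped ComplexOrder

/-- The positive semidefinite square root of a positive semidefinite matrix
(the definition `Matrix.PosSemidef.sqrt` of the older Mathlib, since removed). -/
noncomputable def Matrix.PosSemidef.sqrt {𝕜 : Type*} [RCLike 𝕜] {n : Type*} [Fintype n]
    [DecidableEq n] {A : Matrix n n 𝕜} (hA : A.PosSemidef) : Matrix n n 𝕜 :=
  (hA.1.eigenvectorUnitary : Matrix n n 𝕜) *
    diagonal ((↑) ∘ (√·) ∘ hA.1.eigenvalues : n → 𝕜) *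
    (star hA.1.eigenvectorUnitary : Matrix n n 𝕜)

/-- The matrix sign `sgn H = H * (√(H²))⁻¹` of a Hermitian matrix, where `√(H²)` is the
positive semidefinite square root of `H²`. -/
noncomputable def matrixSign {n : ℕ} (H : Matrix (Fin n) (Fin n) ℂ) (hH : H.IsHermitian) :
    Matrix (Fin n) (Fin n) ℂ :=
  H * ((show (H * H).PosSemidef by
      simpa [hH.eq] using Matrix.posSemidef_conjTranspose_mul_self H).sqrt)⁻¹

open scoped Ring

theorem MulEquiv.map_ringInverse {M₀ N₀ : Type*} [MonoidWithZero M₀] [MonoidWithZero N₀]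
    (e : M₀ ≃* N₀) (a : M₀) : e a⁻¹ʳ = (e a)⁻¹ʳ := by
  by_cases ha : IsUnit a
  · obtain ⟨u, rfl⟩ := ha
    rw [Ring.inverse_unit]
    have := Ring.inverse_unit (Units.map (e : M₀ →* N₀) u)
    rw [← map_inv] at this
    exact this.symm
  · rw [Ring.inverse_non_unit a ha, Ring.inverse_non_unit _ (mt (isUnit_map_iff e a).mp ha)]
    exact map_zero e

namespace CFC

section NonUnital

variable {A B : Type*}
  [PartialOrder A] [NonUnitalRing A] [TopologicalSpace A] [StarRing A]
  [Module ℝ A] [SMulCommClass ℝ A A] [IsScalarTower ℝ A A] [StarOrderedRing A]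
  [NonUnitalContinuousFunctionalCalculus ℝ A IsSelfAdjoint] [NonnegSpectrumClass ℝ A]
  [IsSemitopologicalRing A] [T2Space A]
  [PartialOrder B] [NonUnitalRing B] [TopologicalSpace B] [StarRing B]
  [Module ℝ B] [SMulCommClass ℝ B B] [IsScalarTower ℝ B B] [StarOrderedRing B]
  [NonUnitalContinuousFunctionalCalculus ℝ B IsSelfAdjoint] [NonnegSpectrumClass ℝ B]
  [IsSemitopologicalRing B] [T2Space B]

theorem sqrt_map {F : Type*} [FunLike F A B] [MulHomClass F A B] (f : F)
    (hf : ∀ x, 0 ≤ x → 0 ≤ f x) {a : A} (ha : 0 ≤ a) : sqrt (f a) = f (sqrt a) :=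
  sqrt_unique (by rw [← map_mul, sqrt_mul_sqrt_self a ha]) (hf _ (sqrt_nonneg a))

end NonUnital

variable {A B : Type*}
  [PartialOrder A] [Ring A] [TopologicalSpace A] [StarRing A]
  [Module ℝ A] [SMulCommClass ℝ A A] [IsScalarTower ℝ A A] [StarOrderedRing A]
  [NonUnitalContinuousFunctionalCalculus ℝ A IsSelfAdjoint] [NonnegSpectrumClass ℝ A]
  [IsSemitopologicalRing A] [T2Space A]
  [PartialOrder B] [Ring B] [TopologicalSpace B] [StarRing B]
  [Module ℝ B] [SMulCommClass ℝ B B] [IsScalarTower ℝ B B] [StarOrderedRing B]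
  [NonUnitalContinuousFunctionalCalculus ℝ B IsSelfAdjoint] [NonnegSpectrumClass ℝ B]
  [IsSemitopologicalRing B] [T2Space B]

theorem map_mul_inverse_sqrt_mul_self_of_map_eq_neg (φ κ : A ≃* B)
    (hφ : ∀ x, 0 ≤ x → 0 ≤ φ x) (hκ : ∀ x, 0 ≤ x → 0 ≤ κ x) {h : A} (hh : 0 ≤ h * h)
    (hφκ : φ h = -κ h) :
    φ (h * (sqrt (h * h))⁻¹ʳ) = -κ (h * (sqrt (h * h))⁻¹ʳ) := by
  have hsq : φ (h * h) = κ (h * h) := by rw [map_mul, map_mul, hφκ, neg_mul_neg]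
  have hsqrt : φ (sqrt (h * h)) = κ (sqrt (h * h)) := by
    rw [← sqrt_map φ hφ hh, ← sqrt_map κ hκ hh, hsq]
  rw [map_mul, map_mul, MulEquiv.map_ringInverse, MulEquiv.map_ringInverse, hsqrt, hφκ, neg_mul]

end CFC

section
open scoped MatrixOrder
variable {𝕜 n : Type*} [RCLike 𝕜]

theorem Matrix.PosSemidef.sqrt_eq_cfc_sqrt [Fintype n] [DecidableEq n] {A : Matrix n n 𝕜}
    (hA : A.PosSemidef) : hA.sqrt = CFC.sqrt A := by
  rw [CFC.sqrt_eq_cfc, cfc_nnreal_eq_real _ A (ha := hA.nonneg), hA.1.cfc_eq]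
  simp only [IsHermitian.cfc, Matrix.PosSemidef.sqrt, Unitary.conjStarAlgAut_apply]
  congr 3
  funext i
  simp [Real.coe_sqrt, Real.coe_toNNReal', hA.eigenvalues_nonneg i]

theorem Matrix.map_starRingEnd_nonneg {A : Matrix n n 𝕜} (hA : 0 ≤ A) :
    0 ≤ A.map (starRingEnd 𝕜) := by
  rw [nonneg_iff_posSemidef] at hA ⊢
  have hAt : A.map (starRingEnd 𝕜) = Aᵀ := by
    conv_rhs => rw [← hA.1.eq]
    rfl
  exact hAt ▸ hA.transpose

theorem matrixSign_eq_mul_inverse_sqrt {m : ℕ} (H : Matrix (Fin m) (Fin m) ℂ)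
    (hH : H.IsHermitian) :
    matrixSign H hH = H * (CFC.sqrt (H * H))⁻¹ʳ := by
  rw [matrixSign, PosSemidef.sqrt_eq_cfc_sqrt, nonsing_inv_eq_ringInverse]

end

theorem stmt_10_general {n : ℕ} (H : Matrix (Fin n) (Fin n) ℂ)
    (hH : H.IsHermitian)
    (γ : Matrix (Fin n) (Fin n) ℂ) (hγreal : ∀ i j, (γ i j).im = 0)
    (C : Matrix (Fin n) (Fin n) ℂ) (hC : Cᴴ * C = 1 ∧ C * Cᴴ = 1)
    (hCH : C * H * C⁻¹ = -(H.map (starRingEnd ℂ))) (hCγ : C * γ = -(γ * C))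
    (V : Matrix (Fin n) (Fin n) ℂ) (hV : V = γ * matrixSign H hH) :
    C * V * C⁻¹ = V.map (starRingEnd ℂ) := by
  let u : unitary (Matrix (Fin n) (Fin n) ℂ) := ⟨C, hC.1, hC.2⟩
  let φ := (Unitary.conjStarAlgAut ℂ _ u).toRingEquiv.toMulEquiv
  let κ := (RingEquiv.mapMatrix (m := Fin n) (starRingAut : ℂ ≃+* ℂ)).toMulEquiv
  have hφ (M : Matrix (Fin n) (Fin n) ℂ) : φ M = C * M * C⁻¹ := by
    rw [inv_eq_left_inv hC.1]; rfl
  have hκ (M : Matrix (Fin n) (Fin n) ℂ) : κ M = M.map (starRingEnd ℂ) := rfl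
  open scoped MatrixOrder in
  have hsign : φ (matrixSign H hH) = -κ (matrixSign H hH) := by
    rw [matrixSign_eq_mul_inverse_sqrt]
    exact CFC.map_mul_inverse_sqrt_mul_self_of_map_eq_neg φ κ
      (fun x hx ↦ star_right_conjugate_nonneg hx C) (fun x hx ↦ map_starRingEnd_nonneg hx)
      hH.isSelfAdjoint.mul_self_nonneg (by rw [hφ, hκ, hCH])
  have hγφ : φ γ = -γ := by
    rw [hφ, hCγ, neg_mul, mul_nonsing_inv_cancel_right _ _ (isUnit_det_of_left_inverse hC.1)]
  have hγκ : κ γ = γ := by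
    ext i j
    exact Complex.ext rfl (by simp [hκ, hγreal i j])
  rw [hV, ← hφ, ← hκ, map_mul, map_mul, hsign, hγφ, hγκ, neg_mul_neg]

theorem stmt_10 {n : ℕ} (H : Matrix (Fin n) (Fin n) ℂ)
    (hH : H.IsHermitian) (hHinv : IsUnit H.det)
    (γ : Matrix (Fin n) (Fin n) ℂ) (hγreal : ∀ i j, (γ i j).im = 0)
    (hγherm : γᴴ = γ) (hγ2 : γ * γ = 1)
    (C : Matrix (Fin n) (Fin n) ℂ) (hC : Cᴴ * C = 1 ∧ C * Cᴴ = 1)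
    (hCH : C * H * C⁻¹ = -(H.map (starRingEnd ℂ))) (hCγ : C * γ = -(γ * C))
    (V : Matrix (Fin n) (Fin n) ℂ) (hV : V = γ * matrixSign H hH) :
    C * V * C⁻¹ = V.map (starRingEnd ℂ) :=
  stmt_10_general H hH γ hγreal C hC hCH hCγ V hV
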